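/- arXiv:1410.6440 — 4 statements merged into one kernel-verified Lean document; each statement's English description precedes it below -/
import Mathlib

section
/- Let 𝔤 be a finite-dimensional real Lie algebra with a symmetric, nondegenerate, invariant bilinear form B𝔤 and B𝔤-dual bases e, f : ι → 𝔤, and let ρ : 𝔤 → Module.End ℝ V be a Lie algebra homomorphism (a representation of 𝔤 on a finite-dimensional real vector space V). Then the 4T sum of the families (ρ ∘ e, ρ ∘ f) vanishes. (Proposition 4 / equation (15): the image ρ(C) of the Casimir tensor under a representation of a metrized Lie algebra is a weight tensor, so every such representation defines a framed weight system.) -/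
open scoped TensorProduct Classical

attribute [local instance 100] LieRing.ofAssociativeRing

/-!
Since `ρ a * ρ b - ρ b * ρ a = ρ ⁅a, b⁆`, the `i`-th slice of the 4T sum is
`-ρ (e i) ⊗ (ρ ⊗ ρ) (∑ⱼ ⁅f i, e j⁆ ⊗ f j + e j ⊗ ⁅f i, f j⁆)`, and the bracket is the action of
`f i` on the Casimir tensor `∑ⱼ e j ⊗ f j`, which is `𝔤`-invariant because `B` is: expanding
`⁅x, e j⁆` in the basis `e` and `⁅x, f k⁆` in the basis `f`, the coefficient of `e k ⊗ f j` is
`B ⁅x, e j⁆ (f k) + B (e j) ⁅x, f k⁆ = 0`.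
-/

open Finset TensorProduct

section

variable {R M ι : Type*} [CommRing R]

def IsDualPair [AddCommGroup M] [Module R M] (B : M →ₗ[R] M →ₗ[R] R) (e f : ι → M) : Prop :=
  ∀ i j, B (e i) (f j) = if i = j then 1 else 0

namespace IsDualPair

variable [Fintype ι] [AddCommGroup M] [Module R M] {B : M →ₗ[R] M →ₗ[R] R}

theorem sum_apply_smul_left {e : Module.Basis ι R M} {f : ι → M} (hd : IsDualPair B e f)
    (x : M) : ∑ k, B x (f k) • e k = x := by
  have h : ∑ k, (B.flip (f k)).smulRight (e k) = LinearMap.id :=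
    e.ext fun i => by simp [hd i]
  simpa using LinearMap.congr_fun h x

theorem sum_apply_smul_right {e : ι → M} {f : Module.Basis ι R M} (hd : IsDualPair B e f)
    (x : M) : ∑ k, B (e k) x • f k = x := by
  have h : ∑ k, (B (e k)).smulRight (f k) = LinearMap.id :=
    f.ext fun i => by simp [hd _ i]
  simpa using LinearMap.congr_fun h x

end IsDualPair

section Casimir

variable [Fintype ι] {L : Type*} [LieRing L] [LieAlgebra R L] {B : L →ₗ[R] L →ₗ[R] R}
  {e f : Module.Basis ι R L}

theorem sum_lie_tmul_add_tmul_lie_eq_zero (hd : IsDualPair B e f)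
    (hinv : ∀ x y z : L, B ⁅z, x⁆ y + B x ⁅z, y⁆ = 0) (x : L) :
    ∑ j, (⁅x, e j⁆ ⊗ₜ[R] f j + e j ⊗ₜ[R] ⁅x, f j⁆) = 0 := by
  have expand_left : ∀ j, ⁅x, e j⁆ ⊗ₜ[R] f j = ∑ k, B ⁅x, e j⁆ (f k) • (e k ⊗ₜ[R] f j) := by
    intro j
    conv_lhs => rw [← hd.sum_apply_smul_left ⁅x, e j⁆]
    simp only [sum_tmul, smul_tmul']
  have expand_right : ∀ j, e j ⊗ₜ[R] ⁅x, f j⁆ = ∑ k, B (e k) ⁅x, f j⁆ • (e j ⊗ₜ[R] f k) := by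
    intro j
    conv_lhs => rw [← hd.sum_apply_smul_right ⁅x, f j⁆]
    simp only [tmul_sum, tmul_smul]
  simp only [expand_left, expand_right, sum_add_distrib]
  rw [sum_comm (f := fun j k => B (e k) ⁅x, f j⁆ • (e j ⊗ₜ[R] f k)), ← sum_add_distrib]
  refine sum_eq_zero fun j _ => ?_
  rw [← sum_add_distrib]
  exact sum_eq_zero fun k _ => by rw [← add_smul, hinv, zero_smul]

variable {A : Type*} [Ring A] [Algebra R A]

theorem sum_commutator_tmul_add_tmul_commutator_eq_zero (hd : IsDualPair B e f)
    (hinv : ∀ x y z : L, B ⁅z, x⁆ y + B x ⁅z, y⁆ = 0) (ρ : L →ₗ⁅R⁆ A) (x : L) :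
    ∑ j, ((ρ (e j) * ρ x - ρ x * ρ (e j)) ⊗ₜ[R] ρ (f j)
      + ρ (e j) ⊗ₜ[R] (ρ (f j) * ρ x - ρ x * ρ (f j))) = 0 := by
  have hcomm : ∀ y, ρ y * ρ x - ρ x * ρ y = -ρ ⁅x, y⁆ := fun y => by
    rw [LieHom.map_lie, Ring.lie_def, neg_sub]
  have h := congr_arg (map ρ.toLinearMap ρ.toLinearMap)
    (sum_lie_tmul_add_tmul_lie_eq_zero hd hinv x)
  simp only [map_sum, map_add, map_tmul, LieHom.coe_toLinearMap, map_zero] at h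
  simp only [hcomm, neg_tmul, tmul_neg, ← neg_add, sum_neg_distrib, h, neg_zero]

end Casimir

end

theorem lie_algebra_weight_tensor_4T_general
    {𝔤 : Type*} [LieRing 𝔤] [LieAlgebra ℝ 𝔤]
    {V : Type*} [AddCommGroup V] [Module ℝ V]
    (B : 𝔤 →ₗ[ℝ] 𝔤 →ₗ[ℝ] ℝ)
    (hBinv : ∀ x y z : 𝔤, B ⁅z, x⁆ y + B x ⁅z, y⁆ = 0)
    {ι : Type*} [Fintype ι]
    (e f : Module.Basis ι ℝ 𝔤)
    (hdual : ∀ i j, B (e i) (f j) = if i = j then 1 else 0)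
    (ρ : 𝔤 →ₗ⁅ℝ⁆ Module.End ℝ V) :
    (∑ i, ∑ j, ρ (e i) ⊗ₜ[ℝ] ((ρ (e j) * ρ (f i) - ρ (f i) * ρ (e j)) ⊗ₜ[ℝ] ρ (f j)))
      + (∑ i, ∑ j, ρ (e i) ⊗ₜ[ℝ] (ρ (e j) ⊗ₜ[ℝ] (ρ (f j) * ρ (f i) - ρ (f i) * ρ (f j))))
      = (0 : Module.End ℝ V ⊗[ℝ] (Module.End ℝ V ⊗[ℝ] Module.End ℝ V)) := by
  rw [← sum_add_distrib]
  refine sum_eq_zero fun i _ => ?_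
  rw [← sum_add_distrib]
  simp only [← tmul_add]
  rw [← tmul_sum, sum_commutator_tmul_add_tmul_commutator_eq_zero hdual hBinv ρ (f i), tmul_zero]

/-- The image of the Casimir tensor under a representation of a metrized Lie algebra
satisfies the 4T relation (Proposition 4 / equation (15)). -/
theorem lie_algebra_weight_tensor_4T
    {𝔤 : Type*} [LieRing 𝔤] [LieAlgebra ℝ 𝔤] [FiniteDimensional ℝ 𝔤]
    {V : Type*} [AddCommGroup V] [Module ℝ V] [FiniteDimensional ℝ V]
    (B : 𝔤 →ₗ[ℝ] 𝔤 →ₗ[ℝ] ℝ)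
    (hBsymm : ∀ x y, B x y = B y x)
    (hBnd : ∀ x, (∀ y, B x y = 0) → x = 0)
    (hBinv : ∀ x y z : 𝔤, B ⁅z, x⁆ y + B x ⁅z, y⁆ = 0)
    {ι : Type*} [Fintype ι]
    (e f : Module.Basis ι ℝ 𝔤)
    (hdual : ∀ i j, B (e i) (f j) = if i = j then 1 else 0)
    (ρ : 𝔤 →ₗ⁅ℝ⁆ Module.End ℝ V) :
    (∑ i, ∑ j, ρ (e i) ⊗ₜ[ℝ] ((ρ (e j) * ρ (f i) - ρ (f i) * ρ (e j)) ⊗ₜ[ℝ] ρ (f j)))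
      + (∑ i, ∑ j, ρ (e i) ⊗ₜ[ℝ] (ρ (e j) ⊗ₜ[ℝ] (ρ (f j) * ρ (f i) - ρ (f i) * ρ (f j))))
      = (0 : Module.End ℝ V ⊗[ℝ] (Module.End ℝ V ⊗[ℝ] Module.End ℝ V)) :=
  lie_algebra_weight_tensor_4T_general B hBinv e f hdual ρ
end

section
/- Let V be a finite-dimensional real vector space, B a nondegenerate symmetric bilinear form on V, and R a curvature operator on (V, B) satisfying the symmetric-space identity. Let ι be a finite type and A, A' : ι → Module.End ℝ V families of endomorphisms such that ∑ᵢ (B (A i X) Y) • (A' i) = R X Y for all X, Y ∈ V (so that ∑ᵢ (A i) ⊗ (A' i) is the tensor R̂ obtained from R by raising an index with B). Then the 4T sum of (A, A') vanishes. (Proposition 2 / Theorem 5: the curvature tensor of a pseudo-Riemannian locally symmetric space is a weight tensor and hence defines a framed weight system.) -/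
open scoped TensorProduct Classical

set_option synthInstance.maxHeartbeats 400000
set_option maxHeartbeats 1000000

open Module

section AuxTensor

variable {M N : Type*} [AddCommGroup M] [Module ℝ M] [AddCommGroup N] [Module ℝ N]

/-- Contraction of the first tensor factor against dual functionals. -/
noncomputable def tdh1 : M ⊗[ℝ] N →ₗ[ℝ] (Dual ℝ M →ₗ[ℝ] N) :=
  TensorProduct.lift (LinearMap.mk₂ ℝ (fun m n => (Module.Dual.eval ℝ M m).smulRight n)
    (fun m m' n => by ext f; simp [add_smul])
    (fun c m n => by ext f; simp [mul_smul, smul_comm c])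
    (fun m n n' => by ext f; simp [smul_add])
    (fun c m n => by ext f; simp; exact smul_comm _ _ _))

@[simp] lemma tdh1_tmul (m : M) (n : N) (f : Dual ℝ M) :
    tdh1 (m ⊗ₜ[ℝ] n) f = f m • n := by
  simp [tdh1]

/-- Contraction of the second tensor factor against dual functionals. -/
noncomputable def tdh2 : M ⊗[ℝ] N →ₗ[ℝ] (Dual ℝ N →ₗ[ℝ] M) :=
  TensorProduct.lift (LinearMap.mk₂ ℝ (fun m n => (Module.Dual.eval ℝ N n).smulRight m)
    (fun m m' n => by ext f; simp)
    (fun c m n => by ext f; simp; exact smul_comm _ _ _)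
    (fun m n n' => by ext f; simp [add_smul])
    (fun c m n => by ext f; simp [mul_smul, smul_comm c]))

@[simp] lemma tdh2_tmul (m : M) (n : N) (g : Dual ℝ N) :
    tdh2 (m ⊗ₜ[ℝ] n) g = g n • m := by
  simp [tdh2]

lemma eq_zero_of_tdh1 [FiniteDimensional ℝ M] [FiniteDimensional ℝ N]
    (t : M ⊗[ℝ] N) (h : ∀ f : Dual ℝ M, tdh1 t f = 0) : t = 0 := by
  let b := Module.Free.chooseBasis ℝ M
  let c := Module.Free.chooseBasis ℝ N
  have key : ∀ (s : M ⊗[ℝ] N) i j,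
      (b.tensorProduct c).repr s (i, j) = c.coord j (tdh1 s (b.coord i)) := by
    intro s i j
    induction s using TensorProduct.induction_on with
    | zero => simp
    | tmul m n => simp [Basis.coord_apply, smul_eq_mul, mul_comm]
    | add x y hx hy => simp [map_add, hx, hy]
  have h0 : (b.tensorProduct c).repr t = 0 := by
    ext ij
    rw [Finsupp.zero_apply, ← Prod.mk.eta (p := ij), key t ij.1 ij.2, h (b.coord ij.1)]
    simp
  exact ((b.tensorProduct c).repr.map_eq_zero_iff).mp h0

lemma eq_zero_of_tdh2 [FiniteDimensional ℝ M] [FiniteDimensional ℝ N]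
    (t : M ⊗[ℝ] N) (h : ∀ g : Dual ℝ N, tdh2 t g = 0) : t = 0 := by
  let b := Module.Free.chooseBasis ℝ M
  let c := Module.Free.chooseBasis ℝ N
  have key : ∀ (s : M ⊗[ℝ] N) i j,
      (b.tensorProduct c).repr s (i, j) = b.coord i (tdh2 s (c.coord j)) := by
    intro s i j
    induction s using TensorProduct.induction_on with
    | zero => simp
    | tmul m n => simp [Basis.coord_apply, smul_eq_mul, mul_comm]
    | add x y hx hy => simp [map_add, hx, hy]
  have h0 : (b.tensorProduct c).repr t = 0 := by
    ext ij
    rw [Finsupp.zero_apply, ← Prod.mk.eta (p := ij), key t ij.1 ij.2, h (c.coord ij.2)]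
    simp
  exact ((b.tensorProduct c).repr.map_eq_zero_iff).mp h0

lemma span_dual_eq_top [FiniteDimensional ℝ M] (Ψ : Set (Dual ℝ M))
    (h : ∀ m : M, (∀ f ∈ Ψ, f m = 0) → m = 0) :
    Submodule.span ℝ Ψ = ⊤ := by
  set S := Submodule.span ℝ Ψ with hS
  have hco : S.dualCoannihilator = ⊥ := by
    rw [Submodule.eq_bot_iff]
    intro m hm
    rw [Submodule.mem_dualCoannihilator] at hm
    exact h m fun f hf => hm f (Submodule.subset_span hf)
  have hfr := Subspace.finrank_add_finrank_dualCoannihilator_eq S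
  rw [hco, finrank_bot, add_zero] at hfr
  apply Submodule.eq_top_of_finrank_eq
  rw [hfr, Subspace.dual_finrank_eq]

lemma eq_zero_of_sep_tdh1 [FiniteDimensional ℝ M] [FiniteDimensional ℝ N]
    (t : M ⊗[ℝ] N) (Ψ : Set (Dual ℝ M))
    (hsep : ∀ m : M, (∀ f ∈ Ψ, f m = 0) → m = 0)
    (h : ∀ f ∈ Ψ, tdh1 t f = 0) : t = 0 := by
  apply eq_zero_of_tdh1
  intro f
  have hle : Submodule.span ℝ Ψ ≤ LinearMap.ker (tdh1 t) :=
    Submodule.span_le.mpr fun g hg => LinearMap.mem_ker.mpr (h g hg)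
  exact hle (by rw [span_dual_eq_top Ψ hsep]; trivial)

lemma eq_zero_of_sep_tdh2 [FiniteDimensional ℝ M] [FiniteDimensional ℝ N]
    (t : M ⊗[ℝ] N) (Ψ : Set (Dual ℝ N))
    (hsep : ∀ n : N, (∀ f ∈ Ψ, f n = 0) → n = 0)
    (h : ∀ f ∈ Ψ, tdh2 t f = 0) : t = 0 := by
  apply eq_zero_of_tdh2
  intro f
  have hle : Submodule.span ℝ Ψ ≤ LinearMap.ker (tdh2 t) :=
    Submodule.span_le.mpr fun g hg => LinearMap.mem_ker.mpr (h g hg)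
  exact hle (by rw [span_dual_eq_top Ψ hsep]; trivial)

end AuxTensor

section AuxCurv

variable {V : Type*} [AddCommGroup V] [Module ℝ V] {ι : Type*} [Fintype ι]

/-- The dual functional `e ↦ B (e X) Y` on endomorphisms. -/
noncomputable def psiB (B : V →ₗ[ℝ] V →ₗ[ℝ] ℝ) (X Y : V) :
    Module.Dual ℝ (Module.End ℝ V) where
  toFun e := B (e X) Y
  map_add' e f := by simp
  map_smul' c e := by simp

@[simp] lemma psiB_apply (B : V →ₗ[ℝ] V →ₗ[ℝ] ℝ) (X Y : V) (e : Module.End ℝ V) :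
    psiB B X Y e = B (e X) Y := rfl

lemma sepPsi (B : V →ₗ[ℝ] V →ₗ[ℝ] ℝ) (hBnd : ∀ X, (∀ Y, B X Y = 0) → X = 0) :
    ∀ e : Module.End ℝ V,
      (∀ f ∈ Set.range (fun p : V × V => psiB B p.1 p.2), f e = 0) → e = 0 := by
  intro e he
  apply LinearMap.ext
  intro X
  have : ∀ Y, B (e X) Y = 0 := fun Y => he (psiB B X Y) ⟨(X, Y), rfl⟩
  simpa using hBnd (e X) this

lemma pairSym (B : V →ₗ[ℝ] V →ₗ[ℝ] ℝ)
    (hBsymm : ∀ X Y, B X Y = B Y X)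
    (R : V →ₗ[ℝ] V →ₗ[ℝ] Module.End ℝ V)
    (hRskew : ∀ X Y, R X Y = - R Y X)
    (hRskewAdj : ∀ X Y Z W, B (R X Y Z) W = - B Z (R X Y W))
    (hRbianchi : ∀ X Y Z, R X Y Z + R Y Z X + R Z X Y = 0) :
    ∀ X Y Z W, B (R X Y Z) W = B (R Z W X) Y := by
  have s1 : ∀ a b c d, B (R a b c) d = - B (R b a c) d := by
    intro a b c d; rw [hRskew a b]; simp
  have s2 : ∀ a b c d, B (R a b c) d = - B (R a b d) c := by
    intro a b c d; rw [hRskewAdj a b c d, hBsymm]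
  have EB : ∀ X Y Z W, B (R X Y Z) W + B (R Y Z X) W + B (R Z X Y) W = 0 := by
    intro X Y Z W
    have h := congrArg (fun v => B v W) (hRbianchi X Y Z)
    simpa using h
  intro X Y Z W
  have E1 := EB X Y Z W
  have E2 := EB Y Z W X
  have E3 := EB Z W X Y
  have E4 := EB W X Y Z
  have h1 : B (R Y Z W) X = - B (R Y Z X) W := s2 Y Z W X
  have h2 : B (R Z W Y) X = - B (R Z W X) Y := s2 Z W Y X
  have h3 : B (R W Y Z) X = B (R Y W X) Z := by rw [s1 W Y Z X, s2 Y W Z X, neg_neg]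
  have h4 : B (R W X Z) Y = - B (R W X Y) Z := s2 W X Z Y
  have h5 : B (R X Z W) Y = B (R Z X Y) W := by rw [s1 X Z W Y, s2 Z X W Y, neg_neg]
  have h6 : B (R X Y W) Z = - B (R X Y Z) W := s2 X Y W Z
  linarith

lemma flipId (B : V →ₗ[ℝ] V →ₗ[ℝ] ℝ)
    (hBnd : ∀ X, (∀ Y, B X Y = 0) → X = 0)
    (R : V →ₗ[ℝ] V →ₗ[ℝ] Module.End ℝ V)
    (hps : ∀ X Y Z W, B (R X Y Z) W = B (R Z W X) Y)
    (A A' : ι → Module.End ℝ V)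
    (hAA' : ∀ X Y, ∑ i, (B (A i X) Y) • A' i = R X Y) :
    ∀ X W, ∑ i, (B (A' i X) W) • A i = R X W := by
  intro X W
  apply LinearMap.ext
  intro Z
  have hval : ∀ Y, B ((∑ i, (B (A' i X) W) • A i) Z) Y = B (R X W Z) Y := by
    intro Y
    have h1 : B ((∑ i, (B (A i Z) Y) • A' i) X) W = B (R Z Y X) W := by
      rw [hAA' Z Y]
    have h2 : ∑ i, B (A i Z) Y * B (A' i X) W = B (R Z Y X) W := by
      rw [← h1]
      simp [smul_eq_mul, mul_comm]
    calc B ((∑ i, (B (A' i X) W) • A i) Z) Y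
        = ∑ i, B (A' i X) W * B (A i Z) Y := by
          simp [smul_eq_mul]
      _ = ∑ i, B (A i Z) Y * B (A' i X) W :=
          Finset.sum_congr rfl fun i _ => mul_comm _ _
      _ = B (R Z Y X) W := h2
      _ = B (R X W Z) Y := hps Z Y X W
  have := hBnd ((∑ i, (B (A' i X) W) • A i) Z - R X W Z) (fun Y => by
    rw [map_sub, LinearMap.sub_apply, hval Y, sub_self])
  exact sub_eq_zero.mp this

lemma keyL (A' : ι → Module.End ℝ V) (c : ι → ℝ) (D : Module.End ℝ V)
    (hc : ∑ i, c i • A' i = D) (E : Module.End ℝ V) :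
    ∑ i, c i • (E * A' i - A' i * E) = E * D - D * E := by
  calc ∑ i, c i • (E * A' i - A' i * E)
      = E * (∑ i, c i • A' i) - (∑ i, c i • A' i) * E := by
        rw [Finset.mul_sum, Finset.sum_mul, ← Finset.sum_sub_distrib]
        exact Finset.sum_congr rfl fun i _ => by
          rw [smul_sub, mul_smul_comm, smul_mul_assoc]
    _ = E * D - D * E := by rw [hc]

lemma keyR (A : ι → Module.End ℝ V) (c : ι → ℝ) (D : Module.End ℝ V)
    (hc : ∑ i, c i • A i = D) (C : Module.End ℝ V) :
    ∑ i, c i • (A i * C - C * A i) = D * C - C * D := by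
  calc ∑ i, c i • (A i * C - C * A i)
      = (∑ i, c i • A i) * C - C * (∑ i, c i • A i) := by
        rw [Finset.mul_sum, Finset.sum_mul, ← Finset.sum_sub_distrib]
        exact Finset.sum_congr rfl fun i _ => by
          rw [smul_sub, mul_smul_comm, smul_mul_assoc]
    _ = D * C - C * D := by rw [hc]

lemma invariance [FiniteDimensional ℝ V]
    (B : V →ₗ[ℝ] V →ₗ[ℝ] ℝ)
    (hBnd : ∀ X, (∀ Y, B X Y = 0) → X = 0)
    (R : V →ₗ[ℝ] V →ₗ[ℝ] Module.End ℝ V)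
    (hRskewAdj : ∀ X Y Z W, B (R X Y Z) W = - B Z (R X Y W))
    (hRsym : ∀ X Y Z W, ⁅R X Y, R Z W⁆ = R (R X Y Z) W + R Z (R X Y W))
    (A A' : ι → Module.End ℝ V)
    (hflip : ∀ X W, ∑ i, (B (A' i X) W) • A i = R X W) :
    ∀ Z W, ∑ j, ((A j * R Z W - R Z W * A j) ⊗ₜ[ℝ] A' j
        + A j ⊗ₜ[ℝ] (A' j * R Z W - R Z W * A' j))
      = (0 : Module.End ℝ V ⊗[ℝ] Module.End ℝ V) := by
  intro Z W
  apply eq_zero_of_sep_tdh2 _ (Set.range fun p : V × V => psiB B p.1 p.2)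
    (sepPsi B hBnd)
  rintro f ⟨⟨Z', W'⟩, rfl⟩
  have hexp : tdh2 (∑ j, ((A j * R Z W - R Z W * A j) ⊗ₜ[ℝ] A' j
        + A j ⊗ₜ[ℝ] (A' j * R Z W - R Z W * A' j))) (psiB B Z' W')
      = ∑ j, (B (A' j Z') W' • (A j * R Z W - R Z W * A j)
        + B ((A' j * R Z W - R Z W * A' j) Z') W' • A j) := by
    simp only [map_sum, map_add, LinearMap.sum_apply, LinearMap.add_apply, tdh2_tmul,
      psiB_apply]
  rw [hexp, Finset.sum_add_distrib]
  have e1 : ∑ j, B (A' j Z') W' • (A j * R Z W - R Z W * A j)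
      = R Z' W' * R Z W - R Z W * R Z' W' :=
    keyR A _ _ (hflip Z' W') (R Z W)
  have e2 : ∑ j, B ((A' j * R Z W - R Z W * A' j) Z') W' • A j
      = R (R Z W Z') W' + R Z' (R Z W W') := by
    have hsc : ∀ j, B ((A' j * R Z W - R Z W * A' j) Z') W'
        = B (A' j (R Z W Z')) W' + B (A' j Z') (R Z W W') := by
      intro j
      have hadj := hRskewAdj Z W (A' j Z') W'
      have h1 : (A' j * R Z W - R Z W * A' j) Z' = A' j (R Z W Z') - R Z W (A' j Z') := by
        simp [LinearMap.sub_apply, Module.End.mul_apply]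
      rw [h1, map_sub, LinearMap.sub_apply, hadj]
      ring
    calc ∑ j, B ((A' j * R Z W - R Z W * A' j) Z') W' • A j
        = ∑ j, (B (A' j (R Z W Z')) W' • A j + B (A' j Z') (R Z W W') • A j) :=
          Finset.sum_congr rfl fun j _ => by rw [hsc j, add_smul]
      _ = (∑ j, B (A' j (R Z W Z')) W' • A j) + ∑ j, B (A' j Z') (R Z W W') • A j :=
          Finset.sum_add_distrib
      _ = R (R Z W Z') W' + R Z' (R Z W W') := by rw [hflip, hflip]
  rw [e1, e2]
  have hlie := hRsym Z W Z' W'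
  rw [Ring.lie_def] at hlie
  rw [← hlie]
  abel

end AuxCurv

/-- The curvature tensor of a pseudo-Riemannian locally symmetric space, with one index
raised by the metric, satisfies the 4T relation (Proposition 2 / Theorem 5). -/
theorem curvature_weight_tensor_4T
    {V : Type*} [AddCommGroup V] [Module ℝ V] [FiniteDimensional ℝ V]
    (B : V →ₗ[ℝ] V →ₗ[ℝ] ℝ)
    (hBsymm : ∀ X Y, B X Y = B Y X)
    (hBnd : ∀ X, (∀ Y, B X Y = 0) → X = 0)
    (R : V →ₗ[ℝ] V →ₗ[ℝ] Module.End ℝ V)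
    (hRskew : ∀ X Y, R X Y = - R Y X)
    (hRskewAdj : ∀ X Y Z W, B (R X Y Z) W = - B Z (R X Y W))
    (hRbianchi : ∀ X Y Z, R X Y Z + R Y Z X + R Z X Y = 0)
    (hRsym : ∀ X Y Z W, ⁅R X Y, R Z W⁆ = R (R X Y Z) W + R Z (R X Y W))
    {ι : Type*} [Fintype ι]
    (A A' : ι → Module.End ℝ V)
    (hAA' : ∀ X Y, ∑ i, (B (A i X) Y) • A' i = R X Y) :
    (∑ i, ∑ j, A i ⊗ₜ[ℝ] ((A j * A' i - A' i * A j) ⊗ₜ[ℝ] A' j))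
      + (∑ i, ∑ j, A i ⊗ₜ[ℝ] (A j ⊗ₜ[ℝ] (A' j * A' i - A' i * A' j)))
      = (0 : Module.End ℝ V ⊗[ℝ] (Module.End ℝ V ⊗[ℝ] Module.End ℝ V)) := by
  have hps := pairSym B hBsymm R hRskew hRskewAdj hRbianchi
  have hflip := flipId B hBnd R hps A A' hAA'
  have hinv := invariance B hBnd R hRskewAdj hRsym A A' hflip
  apply eq_zero_of_sep_tdh1 _ (Set.range fun p : V × V => psiB B p.1 p.2)
    (sepPsi B hBnd)
  rintro f ⟨⟨X, Y⟩, rfl⟩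
  have hexp : tdh1 ((∑ i, ∑ j, A i ⊗ₜ[ℝ] ((A j * A' i - A' i * A j) ⊗ₜ[ℝ] A' j))
      + (∑ i, ∑ j, A i ⊗ₜ[ℝ] (A j ⊗ₜ[ℝ] (A' j * A' i - A' i * A' j)))) (psiB B X Y)
      = (∑ i, ∑ j, B (A i X) Y • ((A j * A' i - A' i * A j) ⊗ₜ[ℝ] A' j))
        + (∑ i, ∑ j, B (A i X) Y • (A j ⊗ₜ[ℝ] (A' j * A' i - A' i * A' j))) := by
    simp only [map_add, map_sum, LinearMap.add_apply, LinearMap.sum_apply, tdh1_tmul,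
      psiB_apply]
  rw [hexp]
  rw [Finset.sum_comm (s := Finset.univ) (t := Finset.univ)
    (f := fun i j => B (A i X) Y • ((A j * A' i - A' i * A j) ⊗ₜ[ℝ] A' j))]
  rw [Finset.sum_comm (s := Finset.univ) (t := Finset.univ)
    (f := fun i j => B (A i X) Y • (A j ⊗ₜ[ℝ] (A' j * A' i - A' i * A' j)))]
  have hterm : ∀ j, (∑ i, B (A i X) Y • ((A j * A' i - A' i * A j) ⊗ₜ[ℝ] A' j))
      + (∑ i, B (A i X) Y • (A j ⊗ₜ[ℝ] (A' j * A' i - A' i * A' j)))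
      = (A j * R X Y - R X Y * A j) ⊗ₜ[ℝ] A' j
        + A j ⊗ₜ[ℝ] (A' j * R X Y - R X Y * A' j) := by
    intro j
    have t1 : (∑ i, B (A i X) Y • ((A j * A' i - A' i * A j) ⊗ₜ[ℝ] A' j))
        = (A j * R X Y - R X Y * A j) ⊗ₜ[ℝ] A' j := by
      rw [← keyL A' (fun i => B (A i X) Y) (R X Y) (hAA' X Y) (A j)]
      rw [TensorProduct.sum_tmul]
      exact Finset.sum_congr rfl fun i _ => by rw [TensorProduct.smul_tmul']
    have t2 : (∑ i, B (A i X) Y • (A j ⊗ₜ[ℝ] (A' j * A' i - A' i * A' j)))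
        = A j ⊗ₜ[ℝ] (A' j * R X Y - R X Y * A' j) := by
      rw [← keyL A' (fun i => B (A i X) Y) (R X Y) (hAA' X Y) (A' j)]
      rw [TensorProduct.tmul_sum]
      exact Finset.sum_congr rfl fun i _ => by rw [TensorProduct.tmul_smul]
    rw [t1, t2]
  calc (∑ j, ∑ i, B (A i X) Y • ((A j * A' i - A' i * A j) ⊗ₜ[ℝ] A' j))
        + ∑ j, ∑ i, B (A i X) Y • (A j ⊗ₜ[ℝ] (A' j * A' i - A' i * A' j))
      = ∑ j, ((A j * R X Y - R X Y * A j) ⊗ₜ[ℝ] A' j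
          + A j ⊗ₜ[ℝ] (A' j * R X Y - R X Y * A' j)) := by
        rw [← Finset.sum_add_distrib]
        exact Finset.sum_congr rfl fun j _ => hterm j
    _ = 0 := hinv X Y
end

section
/- Let 𝔤 be a finite-dimensional real Lie algebra with a symmetric, nondegenerate, invariant bilinear form B𝔤 and B𝔤-dual bases e, f : ι → 𝔤, let ρ : 𝔤 → Module.End ℝ V be a Lie algebra homomorphism into the endomorphisms of a finite-dimensional real vector space V, and let B be a nondegenerate symmetric bilinear form on V. Define R X Y := ∑ᵢ (B (ρ(e i) X) Y) • ρ(f i). If R X Y = − R Y X for all X, Y ∈ V (skew-symmetry of the lowered weight tensor in its first two arguments), then R X Y is B-skew-adjoint: B (R X Y Z) W = − B Z (R X Y W) for all X, Y, Z, W ∈ V. Consequently, if in addition the first Bianchi identity R X Y Z + R Y Z X + R Z X Y = 0 holds, then R is a curvature operator on (V, B). (Theorem 8: a Lie algebra weight tensor with curvature symmetries yields an algebraic curvature tensor, and hence is realizable on a symmetric space.) -/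
open scoped Classical

attribute [local instance 100] LieRing.ofAssociativeRing

/-!
Because `B𝔤` is symmetric and `e`, `f` are dual, `∑ᵢ g (e i) * h (f i)` is symmetric in the
linear forms `g`, `h` (the Casimir element `∑ᵢ e i ⊗ f i` is symmetric). Applied to
`g ξ = B (ρ ξ X) Y` and `h ξ = B (ρ ξ Z) W`, this gives the pair symmetry
`B (R X Y Z) W = B (R Z W X) Y`, and together with skew-symmetry of `R` in its first two
arguments the pair symmetry turns into skew-adjointness of `R X Y`.
-/

namespace Module.Basis

variable {R M ι : Type*} [CommSemiring R] [AddCommMonoid M] [Module R M]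
  {B : M →ₗ[R] M →ₗ[R] R} {e : ι → M} {f : Basis ι R M}

theorem coord_eq_of_dual (hdual : ∀ i j, B (e i) (f j) = if i = j then 1 else 0) (i : ι) :
    f.coord i = B (e i) :=
  f.ext fun j => by simp [hdual, Finsupp.single_apply, eq_comm]

variable [Fintype ι]

theorem apply_eq_sum_of_dual (hdual : ∀ i j, B (e i) (f j) = if i = j then 1 else 0)
    (g : M →ₗ[R] R) (x : M) : g x = ∑ j, B (e j) x * g (f j) := by
  conv_lhs => rw [← f.sum_repr x]
  simp [← coord_apply, coord_eq_of_dual hdual]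

theorem sum_mul_comm_of_dual (hB : ∀ x y, B x y = B y x)
    (hdual : ∀ i j, B (e i) (f j) = if i = j then 1 else 0) (g h : M →ₗ[R] R) :
    ∑ i, g (e i) * h (f i) = ∑ i, g (f i) * h (e i) :=
  calc ∑ i, g (e i) * h (f i)
      = ∑ i, ∑ j, B (e j) (e i) * g (f j) * h (f i) :=
        Finset.sum_congr rfl fun i _ => by rw [apply_eq_sum_of_dual hdual g (e i), Finset.sum_mul]
    _ = ∑ j, g (f j) * ∑ i, B (e i) (e j) * h (f i) := by
        rw [Finset.sum_comm]
        refine Finset.sum_congr rfl fun j _ => ?_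
        rw [Finset.mul_sum]
        refine Finset.sum_congr rfl fun i _ => ?_
        rw [hB]
        ring
    _ = ∑ j, g (f j) * h (e j) := by simp only [← apply_eq_sum_of_dual hdual h]

end Module.Basis

section LoweredWeightTensor

variable {K 𝔤 V ι : Type*} [CommRing K] [AddCommGroup 𝔤] [Module K 𝔤]
  [AddCommGroup V] [Module K V] [Fintype ι]
  (B : V →ₗ[K] V →ₗ[K] K) (ρ : 𝔤 →ₗ[K] Module.End K V) (e f : ι → 𝔤)

def loweredWeightTensor : V →ₗ[K] V →ₗ[K] Module.End K V :=
  ∑ i, (B ∘ₗ ρ (e i)).compr₂ (LinearMap.id.smulRight (ρ (f i)))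

@[simp]
theorem loweredWeightTensor_apply (X Y : V) :
    loweredWeightTensor B ρ e f X Y = ∑ i, B (ρ (e i) X) Y • ρ (f i) := by
  simp [loweredWeightTensor]

theorem apply_loweredWeightTensor_apply (X Y Z W : V) :
    B (loweredWeightTensor B ρ e f X Y Z) W = ∑ i, B (ρ (e i) X) Y * B (ρ (f i) Z) W := by
  simp

variable {B ρ e} {B𝔤 : 𝔤 →ₗ[K] 𝔤 →ₗ[K] K} {f : Module.Basis ι K 𝔤}

theorem apply_loweredWeightTensor_apply_comm (hB𝔤 : ∀ x y, B𝔤 x y = B𝔤 y x)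
    (hdual : ∀ i j, B𝔤 (e i) (f j) = if i = j then 1 else 0) (X Y Z W : V) :
    B (loweredWeightTensor B ρ e f X Y Z) W = B (loweredWeightTensor B ρ e f Z W X) Y := by
  have := f.sum_mul_comm_of_dual hB𝔤 hdual
    (B.flip Y ∘ₗ LinearMap.applyₗ X ∘ₗ ρ) (B.flip W ∘ₗ LinearMap.applyₗ Z ∘ₗ ρ)
  simp only [LinearMap.comp_apply, LinearMap.applyₗ_apply_apply, LinearMap.flip_apply] at this
  simp only [apply_loweredWeightTensor_apply, this, mul_comm]

theorem apply_loweredWeightTensor_apply_eq_neg (hB : ∀ X Y, B X Y = B Y X)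
    (hB𝔤 : ∀ x y, B𝔤 x y = B𝔤 y x) (hdual : ∀ i j, B𝔤 (e i) (f j) = if i = j then 1 else 0)
    (hskew : ∀ X Y, loweredWeightTensor B ρ e f X Y = -loweredWeightTensor B ρ e f Y X)
    (X Y Z W : V) :
    B (loweredWeightTensor B ρ e f X Y Z) W = -B Z (loweredWeightTensor B ρ e f X Y W) := by
  set T := loweredWeightTensor B ρ e f
  calc B (T X Y Z) W = B (T Z W X) Y := apply_loweredWeightTensor_apply_comm hB𝔤 hdual X Y Z W
    _ = -B (T W Z X) Y := by simp [hskew Z W]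
    _ = -B Z (T X Y W) := by rw [apply_loweredWeightTensor_apply_comm hB𝔤 hdual, hB]

end LoweredWeightTensor

theorem lowered_weight_tensor_curvature_operator_general
    {𝔤 : Type*} [LieRing 𝔤] [LieAlgebra ℝ 𝔤]
    {V : Type*} [AddCommGroup V] [Module ℝ V]
    (B𝔤 : 𝔤 →ₗ[ℝ] 𝔤 →ₗ[ℝ] ℝ)
    (hB𝔤symm : ∀ x y, B𝔤 x y = B𝔤 y x)
    {ι : Type*} [Fintype ι]
    (e f : Module.Basis ι ℝ 𝔤)
    (hdual : ∀ i j, B𝔤 (e i) (f j) = if i = j then 1 else 0)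
    (ρ : 𝔤 →ₗ⁅ℝ⁆ Module.End ℝ V)
    (B : V →ₗ[ℝ] V →ₗ[ℝ] ℝ)
    (hBsymm : ∀ X Y, B X Y = B Y X)
    (R : V → V → Module.End ℝ V)
    (hR : ∀ X Y, R X Y = ∑ i, (B (ρ (e i) X) Y) • ρ (f i))
    (hRskew : ∀ X Y, R X Y = - R Y X) :
    (∀ X Y Z W : V, B (R X Y Z) W = - B Z (R X Y W)) ∧
    ((∀ X Y Z : V, R X Y Z + R Y Z X + R Z X Y = 0) →
      ((∀ (a : ℝ) (X X' Y : V), R (a • X + X') Y = a • R X Y + R X' Y) ∧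
       (∀ (a : ℝ) (X Y Y' : V), R X (a • Y + Y') = a • R X Y + R X Y') ∧
       (∀ X Y : V, R X Y = - R Y X) ∧
       (∀ X Y Z W : V, B (R X Y Z) W = - B Z (R X Y W)) ∧
       (∀ X Y Z : V, R X Y Z + R Y Z X + R Z X Y = 0))) := by
  set T := loweredWeightTensor B (ρ : 𝔤 →ₗ[ℝ] Module.End ℝ V) e f
  have hRT : ∀ X Y, R X Y = T X Y := fun X Y => by simp [T, hR]
  have hTskew : ∀ X Y, T X Y = -T Y X := fun X Y => by simpa only [hRT] using hRskew X Y
  have hskewAdjoint : ∀ X Y Z W : V, B (R X Y Z) W = -B Z (R X Y W) := fun X Y Z W => by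
    simpa only [hRT] using apply_loweredWeightTensor_apply_eq_neg hBsymm hB𝔤symm hdual hTskew X Y Z W
  refine ⟨hskewAdjoint, fun hBianchi => ⟨?_, ?_, hRskew, hskewAdjoint, hBianchi⟩⟩ <;>
    intros <;> simp only [hRT, map_add, map_smul, LinearMap.add_apply, LinearMap.smul_apply]

/-- Theorem 8 (one direction): if the lowered Lie algebra weight tensor is skew-symmetric
in its first two arguments, then each R X Y is B-skew-adjoint; hence if moreover the first
Bianchi identity holds, R is a curvature operator on (V, B). -/
theorem lowered_weight_tensor_curvature_operator
    {𝔤 : Type*} [LieRing 𝔤] [LieAlgebra ℝ 𝔤] [FiniteDimensional ℝ 𝔤]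
    {V : Type*} [AddCommGroup V] [Module ℝ V] [FiniteDimensional ℝ V]
    (B𝔤 : 𝔤 →ₗ[ℝ] 𝔤 →ₗ[ℝ] ℝ)
    (hB𝔤symm : ∀ x y, B𝔤 x y = B𝔤 y x)
    (hB𝔤nd : ∀ x, (∀ y, B𝔤 x y = 0) → x = 0)
    (hB𝔤inv : ∀ x y z : 𝔤, B𝔤 ⁅z, x⁆ y + B𝔤 x ⁅z, y⁆ = 0)
    {ι : Type*} [Fintype ι]
    (e f : Module.Basis ι ℝ 𝔤)
    (hdual : ∀ i j, B𝔤 (e i) (f j) = if i = j then 1 else 0)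
    (ρ : 𝔤 →ₗ⁅ℝ⁆ Module.End ℝ V)
    (B : V →ₗ[ℝ] V →ₗ[ℝ] ℝ)
    (hBsymm : ∀ X Y, B X Y = B Y X)
    (hBnd : ∀ X, (∀ Y, B X Y = 0) → X = 0)
    (R : V → V → Module.End ℝ V)
    (hR : ∀ X Y, R X Y = ∑ i, (B (ρ (e i) X) Y) • ρ (f i))
    (hRskew : ∀ X Y, R X Y = - R Y X) :
    (∀ X Y Z W : V, B (R X Y Z) W = - B Z (R X Y W)) ∧
    ((∀ X Y Z : V, R X Y Z + R Y Z X + R Z X Y = 0) →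
      ((∀ (a : ℝ) (X X' Y : V), R (a • X + X') Y = a • R X Y + R X' Y) ∧
       (∀ (a : ℝ) (X Y Y' : V), R X (a • Y + Y') = a • R X Y + R X Y') ∧
       (∀ X Y : V, R X Y = - R Y X) ∧
       (∀ X Y Z W : V, B (R X Y Z) W = - B Z (R X Y W)) ∧
       (∀ X Y Z : V, R X Y Z + R Y Z X + R Z X Y = 0))) :=
  lowered_weight_tensor_curvature_operator_general B𝔤 hB𝔤symm e f hdual ρ B hBsymm R hR hRskew
end

section
/- Let 𝔰𝔬₃ be the Lie algebra of skew-symmetric 3×3 real matrices, with bilinear form B x y := (1/2) * trace(x * y), and let e, f : ι → 𝔰𝔬₃ be B-dual bases (ι a finite type, (1/2) * trace((e i) * (f j)) = 1 if i = j and 0 otherwise). Then for all X, Y, Z ∈ ℝ³ (i.e. Fin 3 → ℝ): ∑ᵢ ((e i).mulVec X ⬝ᵥ Y) • ((f i).mulVec Z) = (Y ⬝ᵥ Z) • X − (X ⬝ᵥ Z) • Y, where ⬝ᵥ denotes the standard dot product on ℝ³. (Examples 5, 9, 10: the weight tensor of the standard representation of the holonomy algebra 𝔰𝔬₃ with the form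 ½Tr(xy) equals the curvature tensor R̂^{bd}_{ac} = δ^d_a δ^b_c − g_{ac} g^{bd} of the round unit three-sphere, explaining why the weight system of S³ coincides with that of the Yamada polynomial.) -/
/-!
The form `B x y = ½ tr (x y)` pairs `m ∈ 𝔰𝔬₃` with the skew matrix `w = X Yᵀ - Y Xᵀ` to give
`B m w = (m X) ⬝ Y`. Hence the left-hand side is `∑ᵢ B (eᵢ, w) fᵢ Z`, and expanding `w` in the basis
`f` with coefficients read off by the dual basis `e` collapses it to `w Z = (Y ⬝ Z) X - (X ⬝ Z) Y`.
-/

open Matrix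
open scoped Classical

def so3 : Submodule ℝ (Matrix (Fin 3) (Fin 3) ℝ) where
  carrier := {x | xᵀ = -x}
  add_mem' := by
    intro a b ha hb
    simp only [Set.mem_setOf_eq] at *
    rw [Matrix.transpose_add, ha, hb, neg_add]
  zero_mem' := by simp
  smul_mem' := by
    intro c a ha
    simp only [Set.mem_setOf_eq] at *
    rw [Matrix.transpose_smul, ha, smul_neg]

section DualBasis

variable {R M ι : Type*} [CommSemiring R] [AddCommMonoid M] [Module R M]

theorem LinearMap.BilinForm.apply_eq_basis_repr_of_isDual (B : LinearMap.BilinForm R M)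
    (e : ι → M) (f : Module.Basis ι R M)
    (hdual : ∀ i j, B (e i) (f j) = if i = j then 1 else 0) (x : M) (i : ι) :
    B (e i) x = f.repr x i := by
  have hcoord : B (e i) = f.coord i :=
    f.ext fun j => by simp [hdual, Finsupp.single_apply, eq_comm]
  rw [hcoord, Module.Basis.coord_apply]

theorem LinearMap.BilinForm.sum_smul_basis_of_isDual [Fintype ι] (B : LinearMap.BilinForm R M)
    (e : ι → M) (f : Module.Basis ι R M)
    (hdual : ∀ i j, B (e i) (f j) = if i = j then 1 else 0) (x : M) :
    ∑ i, B (e i) x • f i = x := by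
  simp_rw [B.apply_eq_basis_repr_of_isDual e f hdual]
  exact f.sum_repr x

end DualBasis

section SkewMatrix

variable {R n : Type*} [CommRing R]

theorem Matrix.transpose_vecMulVec_sub (x y : n → R) :
    (vecMulVec x y - vecMulVec y x)ᵀ = -(vecMulVec x y - vecMulVec y x) := by
  rw [transpose_sub, transpose_vecMulVec, transpose_vecMulVec, neg_sub]

variable [Fintype n]

theorem Matrix.trace_mul_vecMulVec (m : Matrix n n R) (x y : n → R) :
    trace (m * vecMulVec x y) = m *ᵥ x ⬝ᵥ y := by
  rw [mul_vecMulVec, trace_vecMulVec]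

theorem Matrix.mulVec_dotProduct_swap_of_transpose_eq_neg {m : Matrix n n R} (hm : mᵀ = -m)
    (x y : n → R) : m *ᵥ y ⬝ᵥ x = -(m *ᵥ x ⬝ᵥ y) := by
  rw [dotProduct_comm, dotProduct_mulVec, ← mulVec_transpose, hm, neg_mulVec, neg_dotProduct]

theorem Matrix.trace_mul_vecMulVec_sub_of_transpose_eq_neg {m : Matrix n n R} (hm : mᵀ = -m)
    (x y : n → R) : trace (m * (vecMulVec x y - vecMulVec y x)) = 2 * (m *ᵥ x ⬝ᵥ y) := by
  rw [mul_sub, trace_sub, trace_mul_vecMulVec, trace_mul_vecMulVec,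
    mulVec_dotProduct_swap_of_transpose_eq_neg hm]
  ring

theorem Matrix.vecMulVec_sub_mulVec (x y z : n → R) :
    (vecMulVec x y - vecMulVec y x) *ᵥ z = (y ⬝ᵥ z) • x - (x ⬝ᵥ z) • y := by
  simp [sub_mulVec, vecMulVec_mulVec]

end SkewMatrix

namespace so3

noncomputable def traceForm : LinearMap.BilinForm ℝ so3 :=
  (1 / 2 : ℝ) • ((LinearMap.mul ℝ (Matrix (Fin 3) (Fin 3) ℝ)).compr₂
    (traceLinearMap (Fin 3) ℝ ℝ)).compl₁₂ so3.subtype so3.subtype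

theorem traceForm_apply (x y : so3) :
    traceForm x y =
      (1 / 2 : ℝ) * trace ((x : Matrix (Fin 3) (Fin 3) ℝ) * (y : Matrix (Fin 3) (Fin 3) ℝ)) :=
  rfl

def wedge (X Y : Fin 3 → ℝ) : so3 :=
  ⟨vecMulVec X Y - vecMulVec Y X, transpose_vecMulVec_sub X Y⟩

theorem traceForm_wedge (m : so3) (X Y : Fin 3 → ℝ) :
    traceForm m (wedge X Y) = (m : Matrix (Fin 3) (Fin 3) ℝ) *ᵥ X ⬝ᵥ Y := by
  rw [traceForm_apply, wedge, trace_mul_vecMulVec_sub_of_transpose_eq_neg m.2]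
  ring

end so3

/-- Examples 5, 9, 10: the weight tensor of the standard representation of 𝔰𝔬₃ with the
form ½Tr(xy) equals the curvature tensor of the round unit three-sphere. -/
theorem so3_weight_tensor_eq_sphere_curvature
    {ι : Type*} [Fintype ι]
    (e f : Module.Basis ι ℝ ↥so3)
    (hdual : ∀ i j, (1/2 : ℝ) * ((e i : Matrix (Fin 3) (Fin 3) ℝ)
        * (f j : Matrix (Fin 3) (Fin 3) ℝ)).trace = if i = j then 1 else 0)
    (X Y Z : Fin 3 → ℝ) :
    ∑ i, ((e i : Matrix (Fin 3) (Fin 3) ℝ).mulVec X ⬝ᵥ Y)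
        • ((f i : Matrix (Fin 3) (Fin 3) ℝ).mulVec Z)
      = (Y ⬝ᵥ Z) • X - (X ⬝ᵥ Z) • Y := by
  have hexpand : ∑ i, so3.traceForm (e i) (so3.wedge X Y) • (f i : Matrix (Fin 3) (Fin 3) ℝ)
      = so3.wedge X Y := by
    exact_mod_cast congrArg Subtype.val (so3.traceForm.sum_smul_basis_of_isDual e f hdual _)
  calc ∑ i, ((e i : Matrix (Fin 3) (Fin 3) ℝ) *ᵥ X ⬝ᵥ Y) • ((f i : Matrix (Fin 3) (Fin 3) ℝ) *ᵥ Z)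
      = (∑ i, so3.traceForm (e i) (so3.wedge X Y) • (f i : Matrix (Fin 3) (Fin 3) ℝ)) *ᵥ Z := by
        simp only [sum_mulVec, smul_mulVec, so3.traceForm_wedge]
    _ = (Y ⬝ᵥ Z) • X - (X ⬝ᵥ Z) • Y := by
        rw [hexpand, so3.wedge, vecMulVec_sub_mulVec]
end
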